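/- Let L be a bounded distributive lattice, n ≥ 1, and let f : Lⁿ → L be an order-preserving function. Then f is a lattice polynomial function if and only if the following all hold: (a) for every function g obtained from f by substituting constants for variables, the diagonal δ_g preserves ∧ and ∨, and δ_f preserves ∧ and ∨; (b) the set {f(x) : x ∈ Lⁿ} is convex; (c) for every a ∈ Lⁿ and every k with 1 ≤ k ≤ n, the set {f(a_k^x) : x ∈ L} is convex; and (d) f(x₁,…,x_{k−1}, f(x), x_{k+1},…,x_n) = f(x) for every x = (x₁,…,x_n) ∈ Lⁿ and every k with 1 ≤ k ≤ n. -/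

import Mathlib

open Classical

variable {L : Type*}

section Defs

variable [DistribLattice L] [BoundedOrder L]

/-- The ternary median term. -/
def med (x y z : L) : L := (x ⊔ y) ⊓ (x ⊔ z) ⊓ (y ⊔ z)

/-- Lattice polynomial functions of arity `n`: the smallest class of functions
`(Fin n → L) → L` containing projections and constants and closed under
pointwise binary meets and joins. -/
inductive IsLatticePolynomial {n : ℕ} : ((Fin n → L) → L) → Prop
  | proj (k : Fin n) : IsLatticePolynomial fun x => x k
  | const (c : L) : IsLatticePolynomial fun _ => c
  | inf {f g : (Fin n → L) → L} :
      IsLatticePolynomial f → IsLatticePolynomial g →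
      IsLatticePolynomial fun x => f x ⊓ g x
  | sup {f g : (Fin n → L) → L} :
      IsLatticePolynomial f → IsLatticePolynomial g →
      IsLatticePolynomial fun x => f x ⊔ g x

/-- Unary lattice polynomial functions: the smallest class of functions `L → L`
containing the identity and constants and closed under pointwise binary meets
and joins. -/
inductive IsUnaryLatticePolynomial : (L → L) → Prop
  | id : IsUnaryLatticePolynomial fun x : L => x
  | const (c : L) : IsUnaryLatticePolynomial fun _ => c
  | inf {f g : L → L} :
      IsUnaryLatticePolynomial f → IsUnaryLatticePolynomial g →
      IsUnaryLatticePolynomial fun x => f x ⊓ g x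
  | sup {f g : L → L} :
      IsUnaryLatticePolynomial f → IsUnaryLatticePolynomial g →
      IsUnaryLatticePolynomial fun x => f x ⊔ g x

/-- `h : L → L` preserves binary meets. -/
def PreservesInf (h : L → L) : Prop := ∀ x y : L, h (x ⊓ y) = h x ⊓ h y

/-- `h : L → L` preserves binary joins. -/
def PreservesSup (h : L → L) : Prop := ∀ x y : L, h (x ⊔ y) = h x ⊔ h y

/-- Condition (H): `f(x ∧ c̄) = f(x) ∧ c` for all `c ∈ [f(0̄), f(1̄)]`. -/
def CondH {n : ℕ} (f : (Fin n → L) → L) : Prop :=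
  ∀ (x : Fin n → L) (c : L), f (fun _ => ⊥) ≤ c → c ≤ f (fun _ => ⊤) →
    (f fun i => x i ⊓ c) = f x ⊓ c

/-- Condition (H*), the dual of (H): `f(x ∨ c̄) = f(x) ∨ c` for all `c ∈ [f(0̄), f(1̄)]`. -/
def CondHDual {n : ℕ} (f : (Fin n → L) → L) : Prop :=
  ∀ (x : Fin n → L) (c : L), f (fun _ => ⊥) ≤ c → c ≤ f (fun _ => ⊤) →
    (f fun i => x i ⊔ c) = f x ⊔ c

/-- Condition (V): `f(x) = f(x ∧ c̄) ∨ f([x]_c)` for all `c ∈ [f(0̄), f(1̄)]`,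
where the `i`-th component of `[x]_c` is `0` if `x i ≤ c`, and `x i` otherwise. -/
def CondV {n : ℕ} (f : (Fin n → L) → L) : Prop :=
  ∀ (x : Fin n → L) (c : L), f (fun _ => ⊥) ≤ c → c ≤ f (fun _ => ⊤) →
    f x = (f fun i => x i ⊓ c) ⊔ (f fun i => if x i ≤ c then ⊥ else x i)

/-- Condition (V*), the dual of (V): `f(x) = f(x ∨ c̄) ∧ f([x]^c)` for all
`c ∈ [f(0̄), f(1̄)]`, where the `i`-th component of `[x]^c` is `1` if `c ≤ x i`,
and `x i` otherwise. -/
def CondVDual {n : ℕ} (f : (Fin n → L) → L) : Prop :=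
  ∀ (x : Fin n → L) (c : L), f (fun _ => ⊥) ≤ c → c ≤ f (fun _ => ⊤) →
    f x = (f fun i => x i ⊔ c) ⊓ (f fun i => if c ≤ x i then ⊤ else x i)

/-- Condition (I): `f(c̄) = c` for all `c ∈ [f(0̄), f(1̄)]`. -/
def CondI {n : ℕ} (f : (Fin n → L) → L) : Prop :=
  ∀ c : L, f (fun _ => ⊥) ≤ c → c ≤ f (fun _ => ⊤) → f (fun _ => c) = c

/-- A subset `S` of `L` is convex if `a ≤ b ≤ c` with `a, c ∈ S` implies `b ∈ S`. -/
def IsConvexSubset (S : Set L) : Prop :=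
  ∀ ⦃a b c : L⦄, a ∈ S → c ∈ S → a ≤ b → b ≤ c → b ∈ S

/-- For every function `g = f_K^a` obtained from `f` by substituting constants for
variables (including `K = ∅`, i.e. `g = f`), the diagonal `δ_g` preserves binary meets.
Here `δ_{f_K^a}(x) = f(y)` where `y i = a i` for `i ∈ K` and `y i = x` otherwise. -/
def DiagSubstPreservesInf {n : ℕ} (f : (Fin n → L) → L) : Prop :=
  ∀ (K : Set (Fin n)) (a : Fin n → L) (x y : L),
    (f fun i => if i ∈ K then a i else x ⊓ y) =
      (f fun i => if i ∈ K then a i else x) ⊓ (f fun i => if i ∈ K then a i else y)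

/-- For every function `g = f_K^a` obtained from `f` by substituting constants for
variables (including `K = ∅`, i.e. `g = f`), the diagonal `δ_g` preserves binary joins. -/
def DiagSubstPreservesSup {n : ℕ} (f : (Fin n → L) → L) : Prop :=
  ∀ (K : Set (Fin n)) (a : Fin n → L) (x y : L),
    (f fun i => if i ∈ K then a i else x ⊔ y) =
      (f fun i => if i ∈ K then a i else x) ⊔ (f fun i => if i ∈ K then a i else y)

end Defs

/-!
In a bounded distributive lattice the unary polynomials are exactly the maps
`u ↦ A ∨ (u ∧ B)`; these preserve `∧` and `∨`, are idempotent and have the convex range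
`[A, A ∨ B]`. Every section of a polynomial obtained by substituting constants is such a map,
which gives the necessity of the conditions. Conversely, if `g : L → L` is an idempotent
`∧`- and `∨`-endomorphism with convex range, then `g 0 ∨ (u ∧ g 1)` lies in the range of `g`,
hence is fixed by `g`, and expanding `g (g 0 ∨ (u ∧ g 1))` shows that it equals `g u`. For the
sections `u ↦ f(x_k^u)` this is the decomposition `f(x_k^u) = f(x_k^0) ∨ (u ∧ f(x_k^1))`, and
applying it to one coordinate after the other writes `f` as a polynomial.
-/

open Function

/-- `substDiag f K a` is the diagonal `δ_g` of the function `g = f_K^a`. -/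
noncomputable def substDiag {n : ℕ} (f : (Fin n → L) → L) (K : Set (Fin n)) (a : Fin n → L) :
    L → L :=
  fun u => f fun i => if i ∈ K then a i else u

theorem substDiag_compl_singleton {n : ℕ} (f : (Fin n → L) → L) (k : Fin n) (a : Fin n → L) :
    substDiag f {k}ᶜ a = fun u => f (update a k u) := by
  funext u
  refine congrArg f (funext fun i => ?_)
  by_cases hik : i = k
  · subst hik; simp
  · simp [hik]

theorem substDiag_empty {n : ℕ} (f : (Fin n → L) → L) (a : Fin n → L) :
    substDiag f ∅ a = fun u => f fun _ => u := by
  funext u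
  unfold substDiag
  simp

section

variable [DistribLattice L]

theorem sup_inf_eq_self_of_mem_Icc {A B b : L} (hb : b ∈ Set.Icc A (A ⊔ B)) :
    A ⊔ b ⊓ B = b := by
  apply le_antisymm (sup_le hb.1 inf_le_left)
  calc b = b ⊓ (A ⊔ B) := (inf_eq_left.2 hb.2).symm
    _ = b ⊓ A ⊔ b ⊓ B := inf_sup_left b A B
    _ ≤ A ⊔ b ⊓ B := sup_le_sup_right inf_le_right _

theorem range_sup_inf (A B : L) : Set.range (fun u => A ⊔ u ⊓ B) = Set.Icc A (A ⊔ B) := by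
  ext b
  constructor
  · rintro ⟨u, rfl⟩
    exact ⟨le_sup_left, sup_le_sup_left inf_le_right _⟩
  · exact fun hb => ⟨b, sup_inf_eq_self_of_mem_Icc hb⟩

theorem isConvexSubset_Icc (a b : L) : IsConvexSubset (Set.Icc a b) :=
  fun _ _ _ hp hq hpb hbq => ⟨hp.1.trans hpb, hbq.trans hq.2⟩

theorem preservesInf_sup_inf (A B : L) : PreservesInf fun u => A ⊔ u ⊓ B := by
  intro u v
  dsimp only
  rw [← sup_inf_left, inf_inf_inf_comm, inf_idem]

theorem preservesSup_sup_inf (A B : L) : PreservesSup fun u => A ⊔ u ⊓ B := by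
  intro u v
  dsimp only
  rw [inf_sup_right, sup_sup_sup_comm, sup_idem]

theorem sup_inf_sup_inf_idem (A B u : L) : A ⊔ (A ⊔ u ⊓ B) ⊓ B = A ⊔ u ⊓ B := by
  rw [inf_sup_right, inf_assoc, inf_idem, ← sup_assoc, sup_inf_self]

theorem PreservesInf.monotone {g : L → L} (hg : PreservesInf g) : Monotone g := by
  intro u v huv
  rw [← inf_eq_left.2 huv, hg]
  exact inf_le_right

theorem IsLatticePolynomial.monotone {n : ℕ} {f : (Fin n → L) → L}
    (hf : IsLatticePolynomial f) : Monotone f := by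
  induction hf with
  | proj k => exact fun _ _ h => h k
  | const c => exact monotone_const
  | inf _ _ ih₁ ih₂ => exact ih₁.inf ih₂
  | sup _ _ ih₁ ih₂ => exact ih₁.sup ih₂

theorem IsLatticePolynomial.isUnaryLatticePolynomial_substDiag {n : ℕ} {f : (Fin n → L) → L}
    (hf : IsLatticePolynomial f) (K : Set (Fin n)) (a : Fin n → L) :
    IsUnaryLatticePolynomial (substDiag f K a) := by
  induction hf with
  | proj k =>
    unfold substDiag
    by_cases hk : k ∈ K
    · simpa [hk] using IsUnaryLatticePolynomial.const (a k)
    · simpa [hk] using IsUnaryLatticePolynomial.id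
  | const c => exact .const c
  | inf _ _ ih₁ ih₂ => exact .inf ih₁ ih₂
  | sup _ _ ih₁ ih₂ => exact .sup ih₁ ih₂

end

section

variable [DistribLattice L] [BoundedOrder L]

theorem eq_sup_inf_of_preserves {g : L → L} (hinf : PreservesInf g) (hsup : PreservesSup g)
    (hconv : IsConvexSubset (Set.range g)) (hidem : ∀ u, g (g u) = g u) (u : L) :
    g u = g ⊥ ⊔ u ⊓ g ⊤ := by
  have hmono := hinf.monotone
  -- `g ⊥ ⊔ u ⊓ g ⊤` lies between `g ⊥` and `g ⊤`, so it is a fixed point of `g`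
  obtain ⟨v, hv⟩ : g ⊥ ⊔ u ⊓ g ⊤ ∈ Set.range g :=
    hconv ⟨⊥, rfl⟩ ⟨⊤, rfl⟩ le_sup_left (sup_le (hmono bot_le) inf_le_right)
  calc g u = g ⊥ ⊔ g u ⊓ g ⊤ := by
        rw [inf_eq_left.2 (hmono le_top), sup_eq_right.2 (hmono bot_le)]
    _ = g (g ⊥ ⊔ u ⊓ g ⊤) := by rw [hsup, hinf, hidem, hidem]
    _ = g ⊥ ⊔ u ⊓ g ⊤ := by rw [← hv, hidem]

theorem IsUnaryLatticePolynomial.exists_eq_sup_inf {g : L → L}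
    (hg : IsUnaryLatticePolynomial g) : ∃ A B : L, g = fun u => A ⊔ u ⊓ B := by
  induction hg with
  | id => exact ⟨⊥, ⊤, by simp⟩
  | const c => exact ⟨c, ⊥, by simp⟩
  | inf _ _ ih₁ ih₂ =>
    obtain ⟨A, B, rfl⟩ := ih₁
    obtain ⟨C, D, rfl⟩ := ih₂
    refine ⟨A ⊓ C, A ⊓ D ⊔ B ⊓ C ⊔ B ⊓ D, funext fun u => ?_⟩
    simp only [inf_sup_left, inf_sup_right]
    simp only [sup_assoc, sup_comm, inf_comm, inf_left_comm, inf_idem]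
  | sup _ _ ih₁ ih₂ =>
    obtain ⟨A, B, rfl⟩ := ih₁
    obtain ⟨C, D, rfl⟩ := ih₂
    refine ⟨A ⊔ C, B ⊔ D, funext fun u => ?_⟩
    rw [inf_sup_left, sup_sup_sup_comm]

variable {n : ℕ}

theorem IsLatticePolynomial.exists_substDiag_eq {f : (Fin n → L) → L}
    (hf : IsLatticePolynomial f) (K : Set (Fin n)) (a : Fin n → L) :
    ∃ A B : L, substDiag f K a = fun u => A ⊔ u ⊓ B :=
  (hf.isUnaryLatticePolynomial_substDiag K a).exists_eq_sup_inf

theorem range_eq_Icc_of_diag_eq {f : (Fin n → L) → L} (hf : Monotone f) {A B : L}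
    (hdiag : (fun u => f fun _ => u) = fun u => A ⊔ u ⊓ B) :
    Set.range f = Set.Icc A (A ⊔ B) := by
  have hdiag' (u : L) : f (fun _ => u) = A ⊔ u ⊓ B := congrFun hdiag u
  refine subset_antisymm ?_ (range_sup_inf A B ▸ hdiag ▸ Set.range_comp_subset_range _ f)
  rintro _ ⟨x, rfl⟩
  constructor
  · calc A = f fun _ => ⊥ := by simp [hdiag']
      _ ≤ f x := hf fun _ => bot_le
  · calc f x ≤ f fun _ => ⊤ := hf fun _ => le_top
      _ = A ⊔ B := by simp [hdiag']

theorem IsLatticePolynomial.of_update_eq {f : (Fin n → L) → L}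
    (hf : ∀ (x : Fin n → L) (k : Fin n) (u : L),
      f (update x k u) = f (update x k ⊥) ⊔ u ⊓ f (update x k ⊤)) :
    IsLatticePolynomial f := by
  suffices h : ∀ (T : Finset (Fin n)) (z : Fin n → L),
      IsLatticePolynomial fun x => f (T.piecewise x z) by
    simpa using h Finset.univ ⊥
  intro T
  induction T using Finset.induction_on with
  | empty => simpa using fun z => IsLatticePolynomial.const (f z)
  | @insert k T hk ih =>
    intro z
    have hexp (x : Fin n → L) : f ((insert k T).piecewise x z) =
        f (T.piecewise x (update z k ⊥)) ⊔ x k ⊓ f (T.piecewise x (update z k ⊤)) := by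
      rw [Finset.piecewise_insert, hf, ← T.update_piecewise_of_notMem _ _ hk,
        ← T.update_piecewise_of_notMem _ _ hk]
    simpa only [hexp] using (ih _).sup ((IsLatticePolynomial.proj k).inf (ih _))

theorem IsLatticePolynomial.diagSubstPreservesInf {f : (Fin n → L) → L}
    (hf : IsLatticePolynomial f) : DiagSubstPreservesInf f := fun K a => by
  obtain ⟨A, B, hAB⟩ := hf.exists_substDiag_eq K a
  exact show PreservesInf (substDiag f K a) from hAB ▸ preservesInf_sup_inf A B

theorem IsLatticePolynomial.diagSubstPreservesSup {f : (Fin n → L) → L}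
    (hf : IsLatticePolynomial f) : DiagSubstPreservesSup f := fun K a => by
  obtain ⟨A, B, hAB⟩ := hf.exists_substDiag_eq K a
  exact show PreservesSup (substDiag f K a) from hAB ▸ preservesSup_sup_inf A B

theorem IsLatticePolynomial.isConvexSubset_range {f : (Fin n → L) → L}
    (hf : IsLatticePolynomial f) : IsConvexSubset (Set.range f) := by
  obtain ⟨A, B, hAB⟩ := hf.exists_substDiag_eq ∅ ⊥
  rw [range_eq_Icc_of_diag_eq hf.monotone (substDiag_empty f ⊥ ▸ hAB)]
  exact isConvexSubset_Icc _ _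

theorem IsLatticePolynomial.isConvexSubset_range_update {f : (Fin n → L) → L}
    (hf : IsLatticePolynomial f) (a : Fin n → L) (k : Fin n) :
    IsConvexSubset (Set.range fun u => f (update a k u)) := by
  obtain ⟨A, B, hAB⟩ := hf.exists_substDiag_eq {k}ᶜ a
  rw [← substDiag_compl_singleton, hAB, range_sup_inf]
  exact isConvexSubset_Icc _ _

theorem IsLatticePolynomial.apply_update_apply_self {f : (Fin n → L) → L}
    (hf : IsLatticePolynomial f) (x : Fin n → L) (k : Fin n) :
    f (update x k (f x)) = f x := by
  obtain ⟨A, B, hAB⟩ := hf.exists_substDiag_eq {k}ᶜ x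
  have hsection := congrFun (substDiag_compl_singleton f k x ▸ hAB)
  have hfx : f x = A ⊔ x k ⊓ B := by simpa using hsection (x k)
  rw [hsection, hfx, sup_inf_sup_inf_idem]

theorem update_eq_sup_inf_of_diagSubst {f : (Fin n → L) → L}
    (hinf : DiagSubstPreservesInf f) (hsup : DiagSubstPreservesSup f)
    (hconv : ∀ a k, IsConvexSubset (Set.range fun u => f (update a k u)))
    (hidem : ∀ x k, f (update x k (f x)) = f x) (x : Fin n → L) (k : Fin n) (u : L) :
    f (update x k u) = f (update x k ⊥) ⊔ u ⊓ f (update x k ⊤) := by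
  have hsection := eq_sup_inf_of_preserves (g := substDiag f {k}ᶜ x)
    (hinf {k}ᶜ x) (hsup {k}ᶜ x) (by simpa only [substDiag_compl_singleton] using hconv x k)
    (fun v => by simpa [substDiag_compl_singleton] using hidem (update x k v) k) u
  simpa only [substDiag_compl_singleton] using hsection

end

theorem isLatticePolynomial_iff_diag_convex_strId_general
    {L : Type*} [DistribLattice L] [BoundedOrder L] {n : ℕ}
    (f : (Fin n → L) → L) :
    IsLatticePolynomial f ↔
      (DiagSubstPreservesInf f ∧ DiagSubstPreservesSup f) ∧
      IsConvexSubset (Set.range f) ∧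
      (∀ (a : Fin n → L) (k : Fin n),
        IsConvexSubset (Set.range fun x : L => f (Function.update a k x))) ∧
      (∀ (x : Fin n → L) (k : Fin n), f (Function.update x k (f x)) = f x) :=
  ⟨fun hf => ⟨⟨hf.diagSubstPreservesInf, hf.diagSubstPreservesSup⟩, hf.isConvexSubset_range,
      hf.isConvexSubset_range_update, hf.apply_update_apply_self⟩,
    fun ⟨⟨hinf, hsup⟩, _, hconv, hidem⟩ =>
      .of_update_eq (update_eq_sup_inf_of_diagSubst hinf hsup hconv hidem)⟩

/-- An order-preserving function `f : Lⁿ → L` (`n ≥ 1`) is a lattice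
polynomial function iff (a) for every function `g` obtained from `f` by substituting
constants for variables (including `f` itself), `δ_g` preserves `∧` and `∨`,
(b) the range of `f` is convex, (c) each set `{f(a_k^x) : x ∈ L}` is convex, and
(d) `f(x₁,…,x_{k−1}, f(x), x_{k+1},…,x_n) = f(x)` for all `x` and `k`. -/
theorem isLatticePolynomial_iff_diag_convex_strId
    {L : Type*} [DistribLattice L] [BoundedOrder L] {n : ℕ} (hn : 1 ≤ n)
    (f : (Fin n → L) → L) (hf : Monotone f) :
    IsLatticePolynomial f ↔
      (DiagSubstPreservesInf f ∧ DiagSubstPreservesSup f) ∧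
      IsConvexSubset (Set.range f) ∧
      (∀ (a : Fin n → L) (k : Fin n),
        IsConvexSubset (Set.range fun x : L => f (Function.update a k x))) ∧
      (∀ (x : Fin n → L) (k : Fin n), f (Function.update x k (f x)) = f x) :=
  isLatticePolynomial_iff_diag_convex_strId_general f
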